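/- Let s be a complex number with 0 < Re s ≤ 1. There is a constant C (one may take C = 2·e^(1/e) < 3) independent of s such that for all complex z with |z| < 1 and 1 - |z| sufficiently small, |∑_{n=1}^∞ z^n / n^s| ≤ C · (1 - |z|)^(-1/(1+Re s)). -/

import Mathlib

/-!
Bound the series termwise by `r ^ (n + 1) / (n + 1) ^ σ` with `r = |z|`, `σ = Re s`, and split it
at `m = ⌊N⌋` for `N = (1 - r) ^ (-1 / (1 + σ))`. Each of the first `m` terms is at most `1`,
and the tail is at most `1 / ((m + 1) ^ σ (1 - r)) ≤ 1 / (N ^ σ (1 - r)) = N`, so the sum is at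
most `2 N`. Finally `2 ≤ 2 e ^ (1 / e) < 3`.
-/

open Real Finset

lemma exp_two_fifths_lt : exp (2 / 5) < 3 / 2 := by
  have h := exp_bound (x := 2 / 5) (abs_le.mpr ⟨by norm_num, by norm_num⟩) (n := 3) (by norm_num)
  norm_num [Finset.sum_range_succ, Nat.factorial, abs_le] at h
  linarith

lemma two_mul_exp_one_rpow_inv_exp_one_lt_three : 2 * exp 1 ^ (1 / exp 1) < 3 := by
  have he : (5 / 2 : ℝ) < exp 1 := by linarith [exp_one_gt_d9]
  have h : 1 / exp 1 < 2 / 5 := by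
    rw [div_lt_div_iff₀ (exp_pos 1) (by norm_num)]; linarith
  rw [exp_one_rpow]
  linarith [(exp_lt_exp.2 h).trans exp_two_fifths_lt]

lemma two_le_two_mul_exp_one_rpow_inv_exp_one : 2 ≤ 2 * exp 1 ^ (1 / exp 1) := by
  have : 1 ≤ exp 1 ^ (1 / exp 1) := one_le_rpow (one_le_exp zero_le_one) (by positivity)
  linarith

section RealSeries

variable {r σ : ℝ}

lemma pow_succ_div_rpow_le_one (hr0 : 0 ≤ r) (hr1 : r ≤ 1) (hσ : 0 ≤ σ) (n : ℕ) :
    r ^ (n + 1) / ((n : ℝ) + 1) ^ σ ≤ 1 :=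
  div_le_one_of_le₀ ((pow_le_one₀ hr0 hr1).trans (one_le_rpow (by simp) hσ)) (by positivity)

lemma summable_pow_succ_div_rpow (hr0 : 0 ≤ r) (hr1 : r < 1) (hσ : 0 ≤ σ) :
    Summable fun n : ℕ => r ^ (n + 1) / ((n : ℝ) + 1) ^ σ := by
  refine (summable_geometric_of_lt_one hr0 hr1).of_nonneg_of_le (fun n => by positivity)
    fun n => div_le_of_le_mul₀ (by positivity) (by positivity) ?_
  calc r ^ (n + 1) ≤ r ^ n := pow_le_pow_of_le_one hr0 hr1.le n.le_succ
    _ ≤ r ^ n * ((n : ℝ) + 1) ^ σ := le_mul_of_one_le_right (by positivity) (one_le_rpow (by simp) hσ)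

lemma tsum_pow_succ_div_rpow_le (hr0 : 0 ≤ r) (hr1 : r < 1) (hσ : 0 ≤ σ) (m : ℕ) :
    ∑' n : ℕ, r ^ (n + 1) / ((n : ℝ) + 1) ^ σ ≤ m + 1 / (((m : ℝ) + 1) ^ σ * (1 - r)) := by
  have hsum := summable_pow_succ_div_rpow hr0 hr1 hσ
  rw [← hsum.sum_add_tsum_nat_add m]
  have head : ∑ n ∈ range m, r ^ (n + 1) / ((n : ℝ) + 1) ^ σ ≤ m := by
    simpa using Finset.sum_le_card_nsmul (range m) _ 1
      fun n _ => pow_succ_div_rpow_le_one hr0 hr1.le hσ n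
  have tail : ∑' i : ℕ, r ^ (i + m + 1) / (((i + m : ℕ) : ℝ) + 1) ^ σ
      ≤ ∑' i : ℕ, r ^ i / ((m : ℝ) + 1) ^ σ := by
    refine Summable.tsum_le_tsum (fun i => ?_) ((summable_nat_add_iff m).2 hsum)
      ((summable_geometric_of_lt_one hr0 hr1).div_const _)
    refine div_le_div₀ (by positivity) (pow_le_pow_of_le_one hr0 hr1.le (by omega)) (by positivity)
      (rpow_le_rpow (by positivity) ?_ hσ)
    push_cast
    linarith [(i.cast_nonneg : (0 : ℝ) ≤ i)]
  rw [tsum_div_const, tsum_geometric_of_lt_one hr0 hr1] at tail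
  calc _ ≤ (m : ℝ) + (1 - r)⁻¹ / ((m : ℝ) + 1) ^ σ := add_le_add head tail
    _ = _ := by rw [inv_div_left, one_div, mul_comm]

lemma rpow_neg_one_div_one_add_rpow_one_add {ε : ℝ} (hε : 0 < ε) (hσ : 0 < 1 + σ) :
    (ε ^ (-(1 / (1 + σ)))) ^ (1 + σ) = ε⁻¹ := by
  rw [← rpow_mul hε.le, neg_mul, one_div_mul_cancel hσ.ne', rpow_neg_one]

lemma tsum_pow_succ_div_rpow_le_two_mul (hr0 : 0 ≤ r) (hr1 : r < 1) (hσ : 0 ≤ σ) :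
    ∑' n : ℕ, r ^ (n + 1) / ((n : ℝ) + 1) ^ σ ≤ 2 * (1 - r) ^ (-(1 / (1 + σ))) := by
  have hε : 0 < 1 - r := by linarith
  set N := (1 - r) ^ (-(1 / (1 + σ)))
  have hN : 0 < N := rpow_pos_of_pos hε _
  have hNσ : N ^ σ * N * (1 - r) = 1 := by
    rw [mul_comm (N ^ σ), ← rpow_one_add' hN.le (by positivity),
      rpow_neg_one_div_one_add_rpow_one_add hε (by linarith), inv_mul_cancel₀ hε.ne']
  have tail : 1 / (N ^ σ * (1 - r)) = N := by
    rw [div_eq_iff (by positivity)]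
    linear_combination -hNσ
  calc _ ≤ (⌊N⌋₊ : ℝ) + 1 / (((⌊N⌋₊ : ℝ) + 1) ^ σ * (1 - r)) :=
        tsum_pow_succ_div_rpow_le hr0 hr1 hσ _
    _ ≤ N + 1 / (N ^ σ * (1 - r)) := by
        gcongr
        · exact Nat.floor_le hN.le
        · exact (Nat.lt_floor_add_one N).le
    _ = 2 * N := by rw [tail]; ring

end RealSeries

lemma norm_pow_succ_div_natCast_add_one_cpow (z s : ℂ) (n : ℕ) :
    ‖z ^ (n + 1) / ((n : ℂ) + 1) ^ s‖ = ‖z‖ ^ (n + 1) / ((n : ℝ) + 1) ^ s.re := by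
  rw [norm_div, norm_pow, ← Complex.norm_cpow_eq_rpow_re_of_pos (by positivity)]
  push_cast
  rfl

lemma norm_polylog_le_two_mul {z s : ℂ} (hz : ‖z‖ < 1) (hs : 0 ≤ s.re) :
    ‖∑' n : ℕ, z ^ (n + 1) / ((n : ℂ) + 1) ^ s‖ ≤ 2 * (1 - ‖z‖) ^ (-(1 / (1 + s.re))) := by
  have hsum := summable_pow_succ_div_rpow (norm_nonneg z) hz hs
  simp_rw [← norm_pow_succ_div_natCast_add_one_cpow z s] at hsum
  calc _ ≤ ∑' n : ℕ, ‖z ^ (n + 1) / ((n : ℂ) + 1) ^ s‖ := norm_tsum_le_tsum_norm hsum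
    _ = ∑' n : ℕ, ‖z‖ ^ (n + 1) / ((n : ℝ) + 1) ^ s.re := by
        simp_rw [norm_pow_succ_div_natCast_add_one_cpow]
    _ ≤ _ := tsum_pow_succ_div_rpow_le_two_mul (norm_nonneg z) hz hs

theorem polylog_bound :
    ∃ C ε₀ : ℝ, C = 2 * Real.exp 1 ^ (1 / Real.exp 1) ∧ C < 3 ∧ 0 < ε₀ ∧
      ∀ (s : ℂ) (z : ℂ), 0 < s.re → s.re ≤ 1 → ‖z‖ < 1 →
        1 - ‖z‖ < ε₀ →
        ‖∑' n : ℕ, z ^ (n + 1) / ((n : ℂ) + 1) ^ s‖ ≤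
          C * (1 - ‖z‖) ^ (-(1 / (1 + s.re))) := by
  refine ⟨_, 1, rfl, two_mul_exp_one_rpow_inv_exp_one_lt_three, one_pos,
    fun s z hs _ hz _ => (norm_polylog_le_two_mul hz hs.le).trans ?_⟩
  gcongr
  exact two_le_two_mul_exp_one_rpow_inv_exp_one
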